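/- If A ∈ ℝ^{n×n} has all eigenvalues with positive real part, then there exists a symmetric positive definite Q with QA + AᵀQ = 2I. -/

import Mathlib

/-!
The spectra of `A` and `-Aᵀ` are disjoint, so by Sylvester's theorem `Y ↦ Y * A + Aᵀ * Y` is
invertible and the Lyapunov equation has a unique solution `Q(A)`; it is symmetric, depends
continuously on `A`, and is nonsingular because `Q v = 0` forces `vᵀ (Q A + Aᵀ Q) v = 0`. The
positive-stable matrices form a set star-shaped about `1`, where `Q(1) = 1`. Along this connected
set, positive definiteness of the nonsingular symmetric matrices `Q(A)` is an open and closed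
condition, hence it holds everywhere.
-/

open Polynomial
open scoped Kronecker

namespace Matrix

section PosDefFamily

variable {ι X : Type*} [Fintype ι] [TopologicalSpace X] {Q : X → Matrix ι ι ℝ}

theorem IsHermitian.posDef_iff_forall_mem_sphere {M : Matrix ι ι ℝ} (hM : M.IsHermitian) :
    M.PosDef ↔ ∀ v ∈ Metric.sphere (0 : ι → ℝ) 1, 0 < v ⬝ᵥ M *ᵥ v := by
  refine ⟨fun h v hv => ?_, fun h => posDef_iff_dotProduct_mulVec.mpr ⟨hM, fun v hv => ?_⟩⟩
  · exact h.dotProduct_mulVec_pos (ne_zero_of_mem_unit_sphere ⟨v, hv⟩)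
  · have hnorm : 0 < ‖v‖ := norm_pos_iff.mpr hv
    have hunit := h (‖v‖⁻¹ • v) (by simp [norm_smul, hnorm.ne'])
    rw [mulVec_smul, dotProduct_smul, smul_dotProduct, smul_smul, smul_eq_mul] at hunit
    rw [star_trivial]
    exact pos_of_mul_pos_right hunit (by positivity)

theorem isOpen_setOf_posDef (hQ : Continuous Q) (hherm : ∀ x, (Q x).IsHermitian) :
    IsOpen {x | (Q x).PosDef} := by
  refine isOpen_iff_eventually.mpr fun x hx => ?_
  simp only [Set.mem_ofPred_eq, (hherm _).posDef_iff_forall_mem_sphere] at hx ⊢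
  refine (isCompact_sphere 0 1).eventually_forall_of_forall_eventually fun v hv => ?_
  have hcont : Continuous fun z : X × (ι → ℝ) => z.2 ⬝ᵥ Q z.1 *ᵥ z.2 := by fun_prop
  exact continuousAt_const.eventually_lt hcont.continuousAt (hx v hv)

theorem isClosed_setOf_posSemidef (hQ : Continuous Q) : IsClosed {x | (Q x).PosSemidef} := by
  simp only [posSemidef_iff_dotProduct_mulVec, IsHermitian, Set.ofPred_and, Set.ofPred_forall]
  exact (isClosed_eq hQ.matrix_conjTranspose hQ).inter
    (isClosed_iInter fun v => isClosed_le continuous_const (by fun_prop))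

theorem posDef_of_preconnectedSpace [DecidableEq ι] [PreconnectedSpace X] (hQ : Continuous Q)
    (hherm : ∀ x, (Q x).IsHermitian) (hdet : ∀ x, (Q x).det ≠ 0) {x₀ : X} (h₀ : (Q x₀).PosDef)
    (x : X) : (Q x).PosDef := by
  have hsemi : {x | (Q x).PosDef} = {x | (Q x).PosSemidef} :=
    Set.ext fun x => ⟨PosDef.posSemidef, fun h => h.posDef_iff_det_ne_zero.mpr (hdet x)⟩
  have hclopen : IsClopen {x | (Q x).PosDef} :=
    ⟨hsemi ▸ isClosed_setOf_posSemidef hQ, isOpen_setOf_posDef hQ hherm⟩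
  exact Set.eq_univ_iff_forall.mp (hclopen.eq_univ ⟨x₀, h₀⟩) x

end PosDefFamily

section Sylvester

variable {m n : Type*} [Fintype m] [DecidableEq m] [Fintype n] [DecidableEq n]

theorem mul_aeval_eq_aeval_mul {R : Type*} [CommRing R] {B : Matrix m m R} {C : Matrix n n R}
    {Y : Matrix n m R} (hY : Y * B = C * Y) (p : R[X]) : Y * aeval B p = aeval C p * Y := by
  induction p using Polynomial.induction_on' with
  | add p q hp hq => simp only [map_add, Matrix.mul_add, Matrix.add_mul, hp, hq]
  | monomial k c =>
    have hpow : Y * B ^ k = C ^ k * Y := by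
      induction k with
      | zero => simp
      | succ k ih =>
        rw [pow_succ, ← Matrix.mul_assoc, ih, Matrix.mul_assoc, hY, ← Matrix.mul_assoc,
          ← pow_succ]
    simp only [aeval_monomial, Algebra.algebraMap_eq_smul_one, Matrix.smul_mul, Matrix.mul_smul,
      Matrix.one_mul, hpow]

theorem eq_zero_of_mul_eq_mul_of_disjoint_spectrum {K : Type*} [Field K] [IsAlgClosed K]
    {B : Matrix m m K} {C : Matrix n n K} {Y : Matrix n m K} (hY : Y * B = C * Y)
    (hBC : Disjoint (spectrum K B) (spectrum K C)) : Y = 0 := by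
  have hunit : IsUnit (aeval C B.charpoly).det := by
    rw [← isUnit_iff_isUnit_det,
      (IsAlgClosed.splits B.charpoly).eq_prod_roots_of_monic B.charpoly_monic]
    by_contra h
    obtain ⟨k, hkC, hkB⟩ := spectrum.exists_mem_of_not_isUnit_aeval_prod h
    exact hBC.ne_of_mem (mem_spectrum_iff_isRoot_charpoly.mpr hkB) hkC rfl
  have h := mul_aeval_eq_aeval_mul hY B.charpoly
  rw [aeval_self_charpoly, Matrix.mul_zero] at h
  calc Y = ((aeval C B.charpoly)⁻¹ * aeval C B.charpoly) * Y := by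
        rw [nonsing_inv_mul _ hunit, Matrix.one_mul]
    _ = 0 := by rw [Matrix.mul_assoc, ← h, Matrix.mul_zero]

end Sylvester

section Lyapunov

variable {n R K : Type*} [DecidableEq n] [CommRing R] [Field K]

def lyapunovMatrix (A : Matrix n n R) : Matrix (n × n) (n × n) R :=
  Aᵀ ⊗ₖ 1 + 1 ⊗ₖ Aᵀ

theorem continuous_lyapunovMatrix [TopologicalSpace R] [IsTopologicalRing R] :
    Continuous (lyapunovMatrix : Matrix n n R → _) :=
  continuous_matrix fun _ _ => by
    simp only [lyapunovMatrix, add_apply, kroneckerMap_apply]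
    fun_prop

variable [Fintype n]

theorem lyapunovMatrix_mulVec_vec (A Y : Matrix n n R) :
    lyapunovMatrix A *ᵥ vec Y = vec (Y * A + Aᵀ * Y) := by
  rw [lyapunovMatrix, add_mulVec, kronecker_mulVec_vec, kronecker_mulVec_vec, vec_add,
    transpose_transpose, transpose_one, Matrix.one_mul, Matrix.mul_one]

theorem det_lyapunovMatrix_ne_zero {A : Matrix n n K}
    (hA : ∀ Y : Matrix n n K, Y * A + Aᵀ * Y = 0 → Y = 0) : (lyapunovMatrix A).det ≠ 0 := by
  rw [Ne, ← exists_mulVec_eq_zero_iff]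
  rintro ⟨v, hv, hAv⟩
  obtain ⟨Y, rfl⟩ := vec_bijective.2 v
  rw [lyapunovMatrix_mulVec_vec, vec_eq_zero_iff] at hAv
  exact hv (by rw [hA Y hAv, vec_zero])

/-- Meaningful only when `(lyapunovMatrix A).det ≠ 0`; otherwise `Matrix.inv` returns `0`. -/
noncomputable def lyapunovSolution (A C : Matrix n n K) : Matrix n n K :=
  of fun i j => ((lyapunovMatrix A)⁻¹ *ᵥ vec C) (j, i)

theorem lyapunovSolution_mul_add {A : Matrix n n K} (C : Matrix n n K)
    (hA : (lyapunovMatrix A).det ≠ 0) :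
    lyapunovSolution A C * A + Aᵀ * lyapunovSolution A C = C := by
  have hvec : vec (lyapunovSolution A C) = (lyapunovMatrix A)⁻¹ *ᵥ vec C := rfl
  rw [← vec_inj, ← lyapunovMatrix_mulVec_vec, hvec, mulVec_mulVec, mul_nonsing_inv _ hA.isUnit,
    one_mulVec]

theorem continuousAt_lyapunovSolution [TopologicalSpace K] [IsTopologicalDivisionRing K]
    {A : Matrix n n K} (C : Matrix n n K) (hA : (lyapunovMatrix A).det ≠ 0) :
    ContinuousAt (lyapunovSolution · C) A := by
  have hinv : ContinuousAt (fun A => (lyapunovMatrix A)⁻¹) A :=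
    (continuousAt_matrix_inv _ (by rw [Ring.inverse_eq_inv']; exact continuousAt_inv₀ hA)).comp
      continuous_lyapunovMatrix.continuousAt
  have hunvec : Continuous fun v : n × n → K => of fun i j => v (j, i) :=
    continuous_matrix fun i j => continuous_apply (j, i)
  exact hunvec.continuousAt.comp
    ((continuous_id.matrix_mulVec continuous_const).continuousAt.comp hinv)

theorem det_ne_zero_of_posDef_mul_add_transpose_mul {Q A : Matrix n n ℝ} (hQ : Q.IsSymm)
    (h : (Q * A + Aᵀ * Q).PosDef) : Q.det ≠ 0 := by
  rw [Ne, ← exists_mulVec_eq_zero_iff]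
  rintro ⟨v, hv, hQv⟩
  have hvQ : v ᵥ* Q = 0 := by rw [← hQ.eq, vecMul_transpose, hQv]
  have hpos := h.dotProduct_mulVec_pos hv
  rw [star_trivial, add_mulVec, dotProduct_add, ← mulVec_mulVec, ← mulVec_mulVec, hQv,
    mulVec_zero, dotProduct_zero, add_zero, dotProduct_mulVec, hvQ, zero_dotProduct] at hpos
  exact hpos.false

end Lyapunov

section PositiveStable

variable {n : Type*} [Fintype n] [DecidableEq n]

def IsPositiveStable (A : Matrix n n ℝ) : Prop :=
  ∀ μ ∈ spectrum ℂ (A.map (algebraMap ℝ ℂ)), 0 < μ.re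

theorem isPositiveStable_one : (1 : Matrix n n ℝ).IsPositiveStable := by
  intro μ hμ
  rcases subsingleton_or_nontrivial (Matrix n n ℂ) with _ | _
  · simp [spectrum.of_subsingleton] at hμ
  · rw [Matrix.map_one _ (map_zero _) (map_one _), spectrum.one_eq, Set.mem_singleton_iff] at hμ
    simp [hμ]

theorem starConvex_isPositiveStable :
    StarConvex ℝ 1 {A : Matrix n n ℝ | A.IsPositiveStable} := by
  intro M hM a b ha hb hab
  rcases hb.eq_or_lt with rfl | hb
  · obtain rfl : a = 1 := by simpa using hab
    simpa using (isPositiveStable_one (n := n))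
  intro μ hμ
  have hmap : (a • 1 + b • M).map (algebraMap ℝ ℂ) = algebraMap ℂ _ (a : ℂ) +
      Units.mk0 (b : ℂ) (by exact_mod_cast hb.ne') • M.map (algebraMap ℝ ℂ) := by
    ext i j
    simp [Matrix.one_apply, Matrix.algebraMap_matrix_apply (n := n), apply_ite]
  rw [hmap, ← sub_add_cancel μ a, spectrum.add_mem_add_iff, spectrum.unit_smul_eq_smul] at hμ
  obtain ⟨ν, hν, hμν⟩ := hμ
  have hνre := hM ν hν
  have hμre : μ.re = a + b * ν.re := by
    rw [← sub_add_cancel μ a, ← hμν]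
    simp [add_comm]
  rw [hμre]
  positivity

namespace IsPositiveStable

variable {A C : Matrix n n ℝ}

theorem eq_zero_of_mul_add_transpose_mul_eq_zero (hA : A.IsPositiveStable) {Y : Matrix n n ℝ}
    (hY : Y * A + Aᵀ * Y = 0) : Y = 0 := by
  let f : Matrix n n ℝ →+* Matrix n n ℂ := (algebraMap ℝ ℂ).mapMatrix
  have hYC : f Y * f A = -(f A)ᵀ * f Y := by
    have hfT : f Aᵀ = (f A)ᵀ := transpose_map ..
    rw [Matrix.neg_mul, eq_neg_iff_add_eq_zero, ← hfT, ← map_mul, ← map_mul, ← map_add, hY,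
      map_zero]
  have hdisj : Disjoint (spectrum ℂ (f A)) (spectrum ℂ (-(f A)ᵀ)) := by
    refine Set.disjoint_left.mpr fun μ hμ hμ' => ?_
    rw [← spectrum.neg_eq, Set.mem_neg, mem_spectrum_iff_isRoot_charpoly, charpoly_transpose,
      ← mem_spectrum_iff_isRoot_charpoly] at hμ'
    have h₁ := hA _ hμ
    have h₂ := hA _ hμ'
    rw [Complex.neg_re] at h₂
    linarith
  exact map_injective (algebraMap ℝ ℂ).injective
    ((eq_zero_of_mul_eq_mul_of_disjoint_spectrum hYC hdisj).trans (map_zero f).symm)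

theorem det_lyapunovMatrix_ne_zero (hA : A.IsPositiveStable) : (lyapunovMatrix A).det ≠ 0 :=
  Matrix.det_lyapunovMatrix_ne_zero fun _ => hA.eq_zero_of_mul_add_transpose_mul_eq_zero

theorem eq_lyapunovSolution (hA : A.IsPositiveStable) {Y : Matrix n n ℝ}
    (hY : Y * A + Aᵀ * Y = C) : Y = lyapunovSolution A C :=
  sub_eq_zero.mp <| hA.eq_zero_of_mul_add_transpose_mul_eq_zero <| by
    rw [Matrix.sub_mul, Matrix.mul_sub, sub_add_sub_comm, hY,
      lyapunovSolution_mul_add C hA.det_lyapunovMatrix_ne_zero, sub_self]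

theorem isSymm_lyapunovSolution (hA : A.IsPositiveStable) (hC : C.IsSymm) :
    (lyapunovSolution A C).IsSymm := by
  refine hA.eq_lyapunovSolution ?_
  conv_rhs => rw [← hC.eq, ← lyapunovSolution_mul_add C hA.det_lyapunovMatrix_ne_zero]
  rw [transpose_add, transpose_mul, transpose_mul, transpose_transpose, add_comm]

theorem posDef_lyapunovSolution (hA : A.IsPositiveStable) (hC : C.PosDef) :
    (lyapunovSolution A C).PosDef := by
  let S := {M : Matrix n n ℝ | M.IsPositiveStable}
  have : PreconnectedSpace S := Subtype.preconnectedSpace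
    (starConvex_isPositiveStable.isPathConnected isPositiveStable_one).isConnected.isPreconnected
  have hCsymm : C.IsSymm := isHermitian_iff_isSymm.mp hC.isHermitian
  have hsymm (M : S) : (lyapunovSolution M.1 C).IsSymm := M.2.isSymm_lyapunovSolution hCsymm
  have hone : lyapunovSolution 1 C = (2⁻¹ : ℝ) • C := by
    refine (isPositiveStable_one.eq_lyapunovSolution ?_).symm
    rw [transpose_one, Matrix.mul_one, Matrix.one_mul, ← add_smul]
    norm_num
  refine posDef_of_preconnectedSpace (Q := fun M : S => lyapunovSolution M.1 C)
    (continuous_iff_continuousAt.mpr fun M =>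
      (continuousAt_lyapunovSolution C M.2.det_lyapunovMatrix_ne_zero).comp
        continuous_subtype_val.continuousAt)
    (fun M => isHermitian_iff_isSymm.mpr (hsymm M))
    (fun M => det_ne_zero_of_posDef_mul_add_transpose_mul (hsymm M)
      (by rwa [lyapunovSolution_mul_add C M.2.det_lyapunovMatrix_ne_zero]))
    (x₀ := ⟨1, isPositiveStable_one⟩) ?_ ⟨A, hA⟩
  rw [hone]
  exact hC.smul (by norm_num)

end IsPositiveStable

end PositiveStable

end Matrix

theorem stmt_17 (n : ℕ) (A : Matrix (Fin n) (Fin n) ℝ)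
    (hA : ∀ μ ∈ spectrum ℂ (A.map (algebraMap ℝ ℂ)), 0 < μ.re) :
    ∃ Q : Matrix (Fin n) (Fin n) ℝ, Q.transpose = Q ∧ Q.PosDef ∧
      Q * A + A.transpose * Q = 2 • (1 : Matrix (Fin n) (Fin n) ℝ) := by
  have hA : A.IsPositiveStable := hA
  have hC : (2 • 1 : Matrix (Fin n) (Fin n) ℝ).PosDef := by
    rw [two_nsmul]
    exact Matrix.PosDef.one.add Matrix.PosDef.one
  have hQ := hA.posDef_lyapunovSolution hC
  exact ⟨_, Matrix.isHermitian_iff_isSymm.mp hQ.isHermitian, hQ,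
    Matrix.lyapunovSolution_mul_add _ hA.det_lyapunovMatrix_ne_zero⟩
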